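/- arXiv:0912.5178 — 2 statements merged into one kernel-verified Lean document; each statement's English description precedes it below -/
import Mathlib

section
/- Assume L is a domain, ℰ is a paving on E, and ν is an L-valued completely maxitive measure on ℰ. Then c* : x ↦ ν*({x}) is a cardinal density of ν (i.e. ν(G) = ⊕_{x ∈ G} c*(x) for all G ∈ ℰ), and it is the maximal density: every cardinal density c of ν satisfies c(x) ≤ c*(x) for all x ∈ E. -/
open Set

variable {E L : Type*}

/-- A prepaving on `E`: a collection of subsets containing `∅` and closed under
(binary, hence finite) unions. -/
def IsPrepaving (ℰ : Set (Set E)) : Prop :=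
  ∅ ∈ ℰ ∧ ∀ A ∈ ℰ, ∀ B ∈ ℰ, A ∪ B ∈ ℰ

/-- A paving on `E`: a prepaving covering `E` such that, for every `x`, the
collection `{G ∈ ℰ : x ∈ G}` is nonempty and filtered under inclusion. -/
def IsPaving (ℰ : Set (Set E)) : Prop :=
  IsPrepaving ℰ ∧ ∀ x : E, (∃ G ∈ ℰ, x ∈ G) ∧
    ∀ G ∈ ℰ, x ∈ G → ∀ G' ∈ ℰ, x ∈ G' → ∃ H ∈ ℰ, x ∈ H ∧ H ⊆ G ∧ H ⊆ G'

/-- An ideal of the prepaving `ℰ`: a nonempty subset of `ℰ` closed under finite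
unions and downward closed (within `ℰ`). -/
def IsIdealOf (ℰ 𝓘 : Set (Set E)) : Prop :=
  𝓘.Nonempty ∧ 𝓘 ⊆ ℰ ∧ (∀ A ∈ 𝓘, ∀ B ∈ 𝓘, A ∪ B ∈ 𝓘) ∧
    ∀ A ∈ ℰ, ∀ B ∈ 𝓘, A ⊆ B → A ∈ 𝓘

/-- A filter of a poset: a nonempty, (downward) filtered, upward-closed subset. -/
def IsFilterSet [PartialOrder L] (F : Set L) : Prop :=
  F.Nonempty ∧ (∀ x ∈ F, ∀ y ∈ F, ∃ z ∈ F, z ≤ x ∧ z ≤ y) ∧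
    ∀ x ∈ F, ∀ y : L, x ≤ y → y ∈ F

/-- `y` is way-above `x`: for every filter `F` possessing an infimum `a`,
`a ≤ x` implies `y ∈ F`. -/
def WayAbove [PartialOrder L] (y x : L) : Prop :=
  ∀ F : Set L, IsFilterSet F → ∀ a : L, IsGLB F a → a ≤ x → y ∈ F

/-- A continuous poset: for every `x`, `↟x = {y : y ≫ x}` is a filter with
infimum `x`. -/
def ContinuousPoset (L : Type*) [PartialOrder L] : Prop :=
  ∀ x : L, IsFilterSet {y : L | WayAbove y x} ∧ IsGLB {y : L | WayAbove y x} x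

/-- A domain: a continuous poset in which every filter has an infimum. -/
def DomainPoset (L : Type*) [PartialOrder L] : Prop :=
  ContinuousPoset L ∧ ∀ F : Set L, IsFilterSet F → ∃ a : L, IsGLB F a

/-- A locally complete poset: every upper-bounded subset has a supremum. -/
def LocallyComplete (L : Type*) [PartialOrder L] : Prop :=
  ∀ S : Set L, BddAbove S → ∃ a : L, IsLUB S a

/-- A maxitive measure on `ℰ`: `ν ∅ = 0`, and for every finite family of
elements of `ℰ` whose union lies in `ℰ`, the supremum of the values exists and
equals the value of the union. -/
def IsMaxitive [PartialOrder L] [OrderBot L] (ℰ : Set (Set E)) (ν : Set E → L) : Prop :=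
  ν ∅ = ⊥ ∧ ∀ S : Finset (Set E), (∀ G ∈ S, G ∈ ℰ) → ⋃₀ (S : Set (Set E)) ∈ ℰ →
    IsLUB (ν '' (S : Set (Set E))) (ν (⋃₀ (S : Set (Set E))))

/-- A completely maxitive measure on `ℰ`: as above, but for arbitrary families. -/
def IsCompletelyMaxitive [PartialOrder L] [OrderBot L] (ℰ : Set (Set E)) (ν : Set E → L) : Prop :=
  ν ∅ = ⊥ ∧ ∀ 𝒢 : Set (Set E), 𝒢 ⊆ ℰ → ⋃₀ 𝒢 ∈ ℰ →
    IsLUB (ν '' 𝒢) (ν (⋃₀ 𝒢))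

open Classical in
/-- The infimum of `S` when it exists, `⊥` otherwise. -/
noncomputable def pInf [PartialOrder L] [OrderBot L] (S : Set L) : L :=
  if h : ∃ a : L, IsGLB S a then h.choose else ⊥

open Classical in
/-- The supremum of `S` when it exists, `⊥` otherwise. -/
noncomputable def pSup [PartialOrder L] [OrderBot L] (S : Set L) : L :=
  if h : ∃ a : L, IsLUB S a then h.choose else ⊥

/-- `ℰ*`: the collection of subsets `A` of `E` such that `{G ∈ ℰ : A ⊆ G}` is
nonempty and filtered under inclusion. -/
def EStar (ℰ : Set (Set E)) : Set (Set E) :=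
  {A | (∃ G ∈ ℰ, A ⊆ G) ∧
    ∀ G ∈ ℰ, A ⊆ G → ∀ G' ∈ ℰ, A ⊆ G' → ∃ H ∈ ℰ, A ⊆ H ∧ H ⊆ G ∧ H ⊆ G'}

/-- The extension `ν*` of `ν`: `ν*(A) = ⋀ {ν G : G ∈ ℰ, A ⊆ G}`. -/
noncomputable def nuStar [PartialOrder L] [OrderBot L] (ℰ : Set (Set E))
    (ν : Set E → L) (A : Set E) : L :=
  pInf (ν '' {G ∈ ℰ | A ⊆ G})

/-- `𝒦`: the compact subsets of `E` for the topology generated by `ℰ`. -/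
def Kpt (ℰ : Set (Set E)) : Set (Set E) :=
  {K | @IsCompact E (TopologicalSpace.generateFrom ℰ) K}

/-- `ℱ = {F ⊆ E : F ∈ ℰ* and Fᶜ ∈ ℰ}`. -/
def Fcl (ℰ : Set (Set E)) : Set (Set E) :=
  {F | F ∈ EStar ℰ ∧ Fᶜ ∈ ℰ}

/-- `ℋ = 𝒦 ∩ ℱ`. -/
def Hcf (ℰ : Set (Set E)) : Set (Set E) := Kpt ℰ ∩ Fcl ℰ

/-- The regular part `⌊ν⌋(G) = ⊕ {ν*(K) : K ∈ 𝒦, K ⊆ G}`. -/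
noncomputable def regPart [PartialOrder L] [OrderBot L] (ℰ : Set (Set E))
    (ν : Set E → L) (G : Set E) : L :=
  pSup (nuStar ℰ ν '' {K ∈ Kpt ℰ | K ⊆ G})

/-- `r` is the residual part of `ν`: the smallest maxitive measure such that
`ν = ⌊ν⌋ ⊕ r` on `ℰ`. -/
def IsResidualPart [Lattice L] [OrderBot L] (ℰ : Set (Set E)) (ν r : Set E → L) : Prop :=
  IsMaxitive ℰ r ∧ (∀ G ∈ ℰ, ν G = regPart ℰ ν G ⊔ r G) ∧
    ∀ τ : Set E → L, IsMaxitive ℰ τ → (∀ G ∈ ℰ, ν G = regPart ℰ ν G ⊔ τ G) →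
      ∀ G ∈ ℰ, r G ≤ τ G
section Aux
variable {E L : Type*}

lemma pInf_isGLB [PartialOrder L] [OrderBot L] {S : Set L} (h : ∃ a : L, IsGLB S a) :
    IsGLB S (pInf S) := by
  unfold pInf; rw [dif_pos h]; exact h.choose_spec

lemma nu_mono [PartialOrder L] [OrderBot L] {ℰ : Set (Set E)} {ν : Set E → L}
    (hν : IsCompletelyMaxitive ℰ ν) {A B : Set E} (hA : A ∈ ℰ) (hB : B ∈ ℰ)
    (hAB : A ⊆ B) : ν A ≤ ν B := by
  have h := hν.2 {A, B} (by rintro G (rfl | rfl) <;> simpa using ‹_›)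
    (by rwa [Set.sUnion_pair, Set.union_eq_right.2 hAB])
  rw [Set.sUnion_pair, Set.union_eq_right.2 hAB] at h
  exact h.1 ⟨A, Or.inl rfl, rfl⟩

/-- The upward closure of the values of `ν` on sets containing `x` is a filter,
with infimum `nuStar ℰ ν {x}`, which is a GLB of the values themselves. -/
lemma cStar_spec [PartialOrder L] [OrderBot L] (hL : DomainPoset L)
    {ℰ : Set (Set E)} (hpav : IsPaving ℰ) {ν : Set E → L}
    (hν : IsCompletelyMaxitive ℰ ν) (x : E) :
    IsFilterSet {l : L | ∃ G ∈ ℰ, x ∈ G ∧ ν G ≤ l} ∧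
      IsGLB {l : L | ∃ G ∈ ℰ, x ∈ G ∧ ν G ≤ l} (nuStar ℰ ν {x}) ∧
      IsGLB (ν '' {G ∈ ℰ | ({x} : Set E) ⊆ G}) (nuStar ℰ ν {x}) := by
  set F : Set L := {l : L | ∃ G ∈ ℰ, x ∈ G ∧ ν G ≤ l} with hF
  have hfil : IsFilterSet F := by
    refine ⟨?_, ?_, ?_⟩
    · obtain ⟨G, hG, hx⟩ := (hpav.2 x).1
      exact ⟨ν G, G, hG, hx, le_rfl⟩
    · rintro a ⟨G, hG, hxG, hGa⟩ b ⟨G', hG', hxG', hG'b⟩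
      obtain ⟨H, hH, hxH, hHG, hHG'⟩ := (hpav.2 x).2 G hG hxG G' hG' hxG'
      exact ⟨ν H, ⟨H, hH, hxH, le_rfl⟩,
        le_trans (nu_mono hν hH hG hHG) hGa, le_trans (nu_mono hν hH hG' hHG') hG'b⟩
    · rintro a ⟨G, hG, hxG, hGa⟩ b hab
      exact ⟨G, hG, hxG, hGa.trans hab⟩
  obtain ⟨a, ha⟩ := hL.2 F hfil
  -- Lower bounds of F are the same as lower bounds of the image set
  have hset : lowerBounds (ν '' {G ∈ ℰ | ({x} : Set E) ⊆ G}) = lowerBounds F := by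
    ext l
    constructor
    · rintro h m ⟨G, hG, hxG, hGm⟩
      exact le_trans (h ⟨G, ⟨hG, Set.singleton_subset_iff.2 hxG⟩, rfl⟩) hGm
    · rintro h m ⟨G, ⟨hG, hxG⟩, rfl⟩
      exact h ⟨G, hG, Set.singleton_subset_iff.1 hxG, le_rfl⟩
  have ha' : IsGLB (ν '' {G ∈ ℰ | ({x} : Set E) ⊆ G}) a := by
    constructor
    · rw [hset]; exact ha.1
    · intro l hl; rw [hset] at hl; exact ha.2 hl
  have hex : ∃ b : L, IsGLB (ν '' {G ∈ ℰ | ({x} : Set E) ⊆ G}) b := ⟨a, ha'⟩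
  have hglb : IsGLB (ν '' {G ∈ ℰ | ({x} : Set E) ⊆ G}) (nuStar ℰ ν {x}) :=
    pInf_isGLB hex
  have heq : nuStar ℰ ν {x} = a := hglb.unique ha'
  exact ⟨hfil, heq ▸ ha, hglb⟩

end Aux

/-- a completely maxitive measure over a domain admits
`c* : x ↦ ν*({x})` as its maximal cardinal density. -/
theorem cStar_maximal_density [PartialOrder L] [OrderBot L]
    (hL : DomainPoset L)
    (ℰ : Set (Set E)) (hpav : IsPaving ℰ)
    (ν : Set E → L) (hν : IsCompletelyMaxitive ℰ ν) :
    (∀ G ∈ ℰ, IsLUB ((fun x : E => nuStar ℰ ν {x}) '' G) (ν G)) ∧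
    ∀ c : E → L, (∀ G ∈ ℰ, IsLUB (c '' G) (ν G)) →
      ∀ x : E, c x ≤ nuStar ℰ ν {x} := by
  constructor
  · intro G hG
    constructor
    · -- ν G is an upper bound
      rintro l ⟨x, hxG, rfl⟩
      exact (cStar_spec hL hpav hν x).2.2.1
        ⟨G, ⟨hG, Set.singleton_subset_iff.2 hxG⟩, rfl⟩
    · -- least upper bound
      intro u hu
      -- Show ν G is a lower bound of the way-above set of u.
      refine (hL.1 u).2.2 ?_
      rintro y (hy : WayAbove y u)
      -- For each x ∈ G, there is H ∈ ℰ with x ∈ H, H ⊆ G, ν H ≤ y.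
      have key : ∀ x ∈ G, ∃ H ∈ ℰ, x ∈ H ∧ H ⊆ G ∧ ν H ≤ y := by
        intro x hxG
        obtain ⟨hfil, hglbF, -⟩ := cStar_spec hL hpav hν x
        have hcu : nuStar ℰ ν {x} ≤ u :=
          hu ⟨x, hxG, rfl⟩
        have hyF : y ∈ {l : L | ∃ G' ∈ ℰ, x ∈ G' ∧ ν G' ≤ l} :=
          hy _ hfil _ hglbF hcu
        obtain ⟨G', hG', hxG', hG'y⟩ := hyF
        obtain ⟨H, hH, hxH, hHG, hHG'⟩ := (hpav.2 x).2 G hG hxG G' hG' hxG'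
        exact ⟨H, hH, hxH, hHG, le_trans (nu_mono hν hH hG' hHG') hG'y⟩
      set 𝒢 : Set (Set E) := {H ∈ ℰ | H ⊆ G ∧ ν H ≤ y} with h𝒢
      have hsub : 𝒢 ⊆ ℰ := fun H hH => hH.1
      have hunion : ⋃₀ 𝒢 = G := by
        apply Set.Subset.antisymm
        · exact Set.sUnion_subset fun H hH => hH.2.1
        · intro x hxG
          obtain ⟨H, hH, hxH, hHG, hHy⟩ := key x hxG
          exact ⟨H, ⟨hH, hHG, hHy⟩, hxH⟩
      have hlub := hν.2 𝒢 hsub (hunion ▸ hG)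
      rw [hunion] at hlub
      exact hlub.2 (by rintro l ⟨H, hH, rfl⟩; exact hH.2.2)
  · -- maximality
    intro c hc x
    refine ((cStar_spec hL hpav hν x).2.2).2 ?_
    rintro l ⟨G, ⟨hG, hxG⟩, rfl⟩
    exact (hc G hG).1 ⟨x, Set.singleton_subset_iff.1 hxG, rfl⟩
end

section
/- Assume L is a domain, ℰ is a paving on E, and ν is an L-valued maxitive measure on ℰ. Then ν* preserves filtered intersections of elements of ℋ: for every family (H_j)_{j∈J} of elements of ℋ that is filtered under inclusion and satisfies ⋂_{j∈J} H_j ∈ ℋ, the infimum ⋀_{j∈J} ν*(H_j) exists and equals ν*(⋂_{j∈J} H_j). -/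
open Set

variable {E L : Type*}

lemma nu_mono_aux [PartialOrder L] [OrderBot L] {ℰ : Set (Set E)} {ν : Set E → L}
    (hν : IsMaxitive ℰ ν) {A B : Set E} (hA : A ∈ ℰ) (hB : B ∈ ℰ) (hAB : A ⊆ B) :
    ν A ≤ ν B := by
  classical
  have h := hν.2 {A, B}
    (by intro G hG; simp only [Finset.mem_insert, Finset.mem_singleton] at hG
        rcases hG with rfl | rfl <;> assumption)
    (by simp only [Finset.coe_insert, Finset.coe_singleton, Set.sUnion_insert,
          Set.sUnion_singleton, Set.union_eq_self_of_subset_left hAB]; exact hB)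
  simp only [Finset.coe_insert, Finset.coe_singleton, Set.sUnion_insert,
    Set.sUnion_singleton, Set.union_eq_self_of_subset_left hAB] at h
  exact h.1 ⟨A, by simp, rfl⟩

lemma isGLB_nuStar_aux [PartialOrder L] [OrderBot L] (hL : DomainPoset L)
    {ℰ : Set (Set E)} {ν : Set E → L} (hν : IsMaxitive ℰ ν)
    {A : Set E} (hA : A ∈ EStar ℰ) :
    IsGLB (ν '' {G ∈ ℰ | A ⊆ G}) (nuStar ℰ ν A) := by
  obtain ⟨⟨G0, hG0, hAG0⟩, hfilt⟩ := hA
  set S := ν '' {G ∈ ℰ | A ⊆ G} with hS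
  have hglb : ∃ a, IsGLB S a := by
    have hfilter : IsFilterSet {y | ∃ s ∈ S, s ≤ y} := by
      refine ⟨⟨ν G0, ⟨ν G0, ⟨G0, ⟨hG0, hAG0⟩, rfl⟩, le_rfl⟩⟩, ?_, ?_⟩
      · rintro x ⟨s, ⟨G1, ⟨hG1, hAG1⟩, rfl⟩, hsx⟩ y ⟨u, ⟨G2, ⟨hG2, hAG2⟩, rfl⟩, huy⟩
        obtain ⟨Hm, hHm, hAHm, h1, h2⟩ := hfilt G1 hG1 hAG1 G2 hG2 hAG2
        exact ⟨ν Hm, ⟨ν Hm, ⟨Hm, ⟨hHm, hAHm⟩, rfl⟩, le_rfl⟩,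
          (nu_mono_aux hν hHm hG1 h1).trans hsx,
          (nu_mono_aux hν hHm hG2 h2).trans huy⟩
      · rintro x ⟨s, hs, hsx⟩ y hxy
        exact ⟨s, hs, hsx.trans hxy⟩
    obtain ⟨a, ha⟩ := hL.2 _ hfilter
    refine ⟨a, ⟨fun s hs => ha.1 ⟨s, hs, le_refl s⟩, fun b hb => ha.2 ?_⟩⟩
    rintro y ⟨s, hs, hsy⟩
    exact (hb hs).trans hsy
  have : nuStar ℰ ν A = hglb.choose := by rw [nuStar, ← hS, pInf, dif_pos hglb]
  rw [this]
  exact hglb.choose_spec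

/-- `ν*` preserves filtered intersections of elements of `ℋ`. -/
theorem nuStar_preserves_filtered_inter_Hcf [PartialOrder L] [OrderBot L]
    (hL : DomainPoset L)
    (ℰ : Set (Set E)) (hpav : IsPaving ℰ)
    (ν : Set E → L) (hν : IsMaxitive ℰ ν)
    {J : Type*} [Nonempty J] (H : J → Set E) (hH : ∀ j : J, H j ∈ Hcf ℰ)
    (hfil : ∀ i j : J, ∃ k : J, H k ⊆ H i ∧ H k ⊆ H j)
    (hint : (⋂ j : J, H j) ∈ Hcf ℰ) :
    IsGLB (Set.range fun j : J => nuStar ℰ ν (H j)) (nuStar ℰ ν (⋂ j : J, H j)) := by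
  classical
  letI : TopologicalSpace E := TopologicalSpace.generateFrom ℰ
  have hcomp : ∀ j, IsCompact (H j) := fun j => (hH j).1
  have hEstar : ∀ j, H j ∈ EStar ℰ := fun j => (hH j).2.1
  have hcompl : ∀ j, (H j)ᶜ ∈ ℰ := fun j => (hH j).2.2
  have hintE : (⋂ j, H j) ∈ EStar ℰ := hint.2.1
  have glbj : ∀ j, IsGLB (ν '' {G ∈ ℰ | H j ⊆ G}) (nuStar ℰ ν (H j)) :=
    fun j => isGLB_nuStar_aux hL hν (hEstar j)
  have glbI : IsGLB (ν '' {G ∈ ℰ | (⋂ j, H j) ⊆ G}) (nuStar ℰ ν (⋂ j, H j)) :=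
    isGLB_nuStar_aux hL hν hintE
  obtain ⟨j0⟩ := ‹Nonempty J›
  constructor
  · rintro x ⟨j, rfl⟩
    apply (glbj j).2
    rintro y ⟨G, ⟨hG, hHG⟩, rfl⟩
    exact glbI.1 ⟨G, ⟨hG, (Set.iInter_subset H j).trans hHG⟩, rfl⟩
  · intro b hb
    apply glbI.2
    rintro y ⟨G, ⟨hG, hIG⟩, rfl⟩
    have hopenG : IsOpen G := TopologicalSpace.GenerateOpen.basic _ hG
    have hopenC : ∀ j, IsOpen (H j)ᶜ :=
      fun j => TopologicalSpace.GenerateOpen.basic _ (hcompl j)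
    have hcov : H j0 \ G ⊆ ⋃ j, (H j)ᶜ := by
      rintro x ⟨hx0, hxG⟩
      by_contra h
      simp only [Set.mem_iUnion, Set.mem_compl_iff, not_exists, not_not] at h
      exact hxG (hIG (Set.mem_iInter.mpr h))
    obtain ⟨t, ht⟩ := ((hcomp j0).diff hopenG).elim_finite_subcover _ hopenC hcov
    have hdir : ∀ s : Finset J, ∃ k, ∀ j ∈ s, H k ⊆ H j := by
      intro s
      induction s using Finset.induction_on with
      | empty => exact ⟨j0, fun j hj => absurd hj (Finset.notMem_empty j)⟩
      | @insert a s ha ih =>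
        obtain ⟨k, hk⟩ := ih
        obtain ⟨k', h1, h2⟩ := hfil a k
        refine ⟨k', fun j hj => ?_⟩
        rcases Finset.mem_insert.mp hj with rfl | hj
        · exact h1
        · exact h2.trans (hk j hj)
    obtain ⟨k, hk⟩ := hdir (insert j0 t)
    have hkG : H k ⊆ G := by
      intro x hx
      by_contra hxG
      have hx' : x ∈ ⋃ j ∈ t, (H j)ᶜ :=
        ht ⟨hk j0 (Finset.mem_insert_self _ _) hx, hxG⟩
      simp only [Set.mem_iUnion] at hx'
      obtain ⟨j, hj, hxj⟩ := hx'
      exact hxj (hk j (Finset.mem_insert_of_mem hj) hx)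
    calc b ≤ nuStar ℰ ν (H k) := hb ⟨k, rfl⟩
      _ ≤ ν G := (glbj k).1 ⟨G, ⟨hG, hkG⟩, rfl⟩
end
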